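/- Assume b = A x̄ + z, let δ' ∈ (0,1), γ > (1+δ')/(1−δ'), and λ > 0 satisfy λ ≥ max{4, (γ+1)/((1−δ')γ − (1+δ'))} · ‖Aᵀz‖_∞, and let Γ_u > 1 and s̃ ≥ 1 be an integer with ρ₋(A, s̄+2s̃) > 0 and s̃ > 16(Γ_u ρ₊(A, s̄+2s̃) + 2ρ₊(A, s̃)) (1+γ) s̄ / ρ₋(A, s̄+s̃). Suppose x ∈ ℝⁿ satisfies ‖x_{S̄ᶜ}‖₀ ≤ s̃ and φ_λ(x) ≤ φ_λ(x̄) + 2δ'(1+γ)λ² s̄ / ρ₋(A, s̄+s̃), and let 0 < L < Γ_u ρ₊(A, s̄+2s̃). Then ‖(T_{λ,L}(x))_{S̄ᶜ}‖₀ < s̃. -/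

import Mathlib

open scoped BigOperators
open Matrix

noncomputable section

namespace PGH

/-- Euclidean dot product on `Fin n → ℝ`. -/
def dot {n : ℕ} (x y : Fin n → ℝ) : ℝ := ∑ i, x i * y i

/-- Squared Euclidean norm. -/
def sqnorm {n : ℕ} (x : Fin n → ℝ) : ℝ := ∑ i, (x i) ^ 2

/-- Euclidean (ℓ₂) norm. -/
noncomputable def l2 {n : ℕ} (x : Fin n → ℝ) : ℝ := Real.sqrt (sqnorm x)

/-- ℓ₁ norm. -/
def l1 {n : ℕ} (x : Fin n → ℝ) : ℝ := ∑ i, |x i|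

/-- ℓ∞ norm (maximum absolute coordinate). -/
noncomputable def linf {n : ℕ} (x : Fin n → ℝ) : ℝ := ⨆ i, |x i|

/-- Support of a vector. -/
def supp {n : ℕ} (x : Fin n → ℝ) : Finset (Fin n) := Finset.univ.filter (fun i => x i ≠ 0)

/-- Number of nonzero coordinates. -/
def l0 {n : ℕ} (x : Fin n → ℝ) : ℕ := (supp x).card

/-- Number of nonzero coordinates within the index set `S`
(i.e. `‖x_S‖₀` for the restriction of `x` to `S`). -/
def l0on {n : ℕ} (S : Finset (Fin n)) (x : Fin n → ℝ) : ℕ :=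
  (S.filter (fun i => x i ≠ 0)).card

/-- ℓ₁ norm of the restriction of `x` to the index set `S`. -/
def l1on {n : ℕ} (S : Finset (Fin n)) (x : Fin n → ℝ) : ℝ := ∑ i ∈ S, |x i|

/-- Gradient of `f(x) = (1/2)‖Ax - b‖₂²`, namely `Aᵀ(Ax - b)`. -/
def grad {m n : ℕ} (A : Matrix (Fin m) (Fin n) ℝ) (b : Fin m → ℝ) (x : Fin n → ℝ) :
    Fin n → ℝ :=
  Aᵀ.mulVec (A.mulVec x - b)

/-- Least-squares objective `f(x) = (1/2)‖Ax - b‖₂²`. -/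
def fls {m n : ℕ} (A : Matrix (Fin m) (Fin n) ℝ) (b : Fin m → ℝ) (x : Fin n → ℝ) : ℝ :=
  sqnorm (A.mulVec x - b) / 2

/-- ℓ₁-regularized least-squares objective `φ_λ(x) = f(x) + λ‖x‖₁`. -/
def phi {m n : ℕ} (A : Matrix (Fin m) (Fin n) ℝ) (b : Fin m → ℝ) (lam : ℝ)
    (x : Fin n → ℝ) : ℝ :=
  fls A b x + lam * l1 x

/-- Restricted maximal eigenvalue `ρ₊(A, s)`. -/
noncomputable def rhoPlus {m n : ℕ} (A : Matrix (Fin m) (Fin n) ℝ) (s : ℕ) : ℝ :=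
  sSup {r | ∃ x : Fin n → ℝ, x ≠ 0 ∧ l0 x ≤ s ∧ r = sqnorm (A.mulVec x) / sqnorm x}

/-- Restricted minimal eigenvalue `ρ₋(A, s)`. -/
noncomputable def rhoMinus {m n : ℕ} (A : Matrix (Fin m) (Fin n) ℝ) (s : ℕ) : ℝ :=
  sInf {r | ∃ x : Fin n → ℝ, x ≠ 0 ∧ l0 x ≤ s ∧ r = sqnorm (A.mulVec x) / sqnorm x}

/-- `ξ` is a subgradient of the ℓ₁ norm at `x`. -/
def IsSubgrad {n : ℕ} (x ξ : Fin n → ℝ) : Prop :=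
  ∀ i, (x i ≠ 0 → ξ i = Real.sign (x i)) ∧ (x i = 0 → |ξ i| ≤ 1)

/-- Optimality residue `ω_λ(x) = min_{ξ ∈ ∂‖x‖₁} ‖Aᵀ(Ax−b) + λξ‖_∞`. -/
noncomputable def omega {m n : ℕ} (A : Matrix (Fin m) (Fin n) ℝ) (b : Fin m → ℝ)
    (lam : ℝ) (x : Fin n → ℝ) : ℝ :=
  sInf {r | ∃ ξ : Fin n → ℝ, IsSubgrad x ξ ∧
    r = linf (fun i => grad A b x i + lam * ξ i)}

/-- The local model `ψ_{λ,L}(y; x)`. -/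
def psi {m n : ℕ} (A : Matrix (Fin m) (Fin n) ℝ) (b : Fin m → ℝ) (lam L : ℝ)
    (y x : Fin n → ℝ) : ℝ :=
  fls A b y + dot (grad A b y) (x - y) + L / 2 * sqnorm (x - y) + lam * l1 x

/-- The noise-domination condition
`λ ≥ max{4, (γ+1)/((1−δ')γ−(1+δ'))} ⬝ ‖Aᵀz‖_∞`. -/
def noiseCond {m n : ℕ} (A : Matrix (Fin m) (Fin n) ℝ) (z : Fin m → ℝ)
    (dp gam lam : ℝ) : Prop :=
  lam ≥ max 4 ((gam + 1) / ((1 - dp) * gam - (1 + dp))) * linf (Aᵀ.mulVec z)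

/-!
Write `Δ = x - x̄` and `ρ₋ = ρ₋(A, s̄ + s̃)`. The objective bound and `‖Aᵀz‖_∞ ≤ λ/4` give the
cone inequality `‖AΔ‖²/2 + (3λ/4)‖Δ_{S̄ᶜ}‖₁ ≤ (5λ/4)‖Δ_{S̄}‖₁ + 2δ'(1+γ)λ²s̄/ρ₋`, which together
with `ρ₋‖Δ‖² ≤ ‖AΔ‖²` yields `ρ₋‖AΔ‖² ≤ 9(1+γ)λ²s̄` and `ρ₋‖Δ_{S̄ᶜ}‖₁ ≤ (23/3)(1+γ)λs̄`.
If `T` had `s̃` nonzero coordinates `S` off `S̄`, testing its stationarity condition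
`∇f(x)_i + L(T_i - x_i) + λ sign T_i = 0` against `w = sign T` on `S` would give
`λs̃ ≤ |⟪Aw, AΔ⟫| + λs̃/4 + L‖Δ_{S̄ᶜ}‖₁` with `⟪Aw, AΔ⟫² ≤ ρ₊(A, s̃) s̃ ‖AΔ‖²`,
hence `ρ₋ s̃ ≤ 16(L + 2ρ₊(A, s̃))(1+γ)s̄`, contradicting the lower bound on `s̃`.
-/

open Finset

variable {m n : ℕ}

section Vectors

lemma sqnorm_nonneg (x : Fin n → ℝ) : 0 ≤ sqnorm x :=
  sum_nonneg fun _ _ => sq_nonneg _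

lemma sqnorm_pos {x : Fin n → ℝ} (hx : x ≠ 0) : 0 < sqnorm x := by
  obtain ⟨i, hi⟩ := Function.ne_iff.1 hx
  exact (sq_pos_iff.2 hi).trans_le (single_le_sum (fun j _ => sq_nonneg (x j)) (mem_univ i))

@[simp] lemma sqnorm_zero : sqnorm (0 : Fin n → ℝ) = 0 := by simp [sqnorm]

lemma sqnorm_eq_dotProduct (x : Fin n → ℝ) : sqnorm x = x ⬝ᵥ x := by
  simp [sqnorm, dotProduct, sq]

lemma dot_comm (x y : Fin n → ℝ) : dot x y = dot y x :=
  dotProduct_comm x y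

lemma sq_dot_le_sqnorm_mul_sqnorm (x y : Fin n → ℝ) : dot x y ^ 2 ≤ sqnorm x * sqnorm y :=
  sum_mul_sq_le_sq_mul_sq _ _ _

lemma dot_transpose_mulVec (A : Matrix (Fin m) (Fin n) ℝ) (x : Fin n → ℝ) (p : Fin m → ℝ) :
    dot x (Aᵀ *ᵥ p) = dot (A *ᵥ x) p := by
  change x ⬝ᵥ (Aᵀ *ᵥ p) = (A *ᵥ x) ⬝ᵥ p
  rw [dotProduct_mulVec, vecMul_transpose, dotProduct_comm]

lemma abs_le_linf (x : Fin n → ℝ) (i : Fin n) : |x i| ≤ linf x :=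
  le_ciSup (f := fun j => |x j|) (Set.finite_range _).bddAbove i

lemma linf_nonneg (x : Fin n → ℝ) : 0 ≤ linf x :=
  Real.iSup_nonneg fun _ => abs_nonneg _

lemma l1_nonneg (x : Fin n → ℝ) : 0 ≤ l1 x :=
  sum_nonneg fun _ _ => abs_nonneg _

lemma l1on_nonneg (S : Finset (Fin n)) (x : Fin n → ℝ) : 0 ≤ l1on S x :=
  sum_nonneg fun _ _ => abs_nonneg _

lemma abs_dot_le_l1_mul_linf (x y : Fin n → ℝ) : |dot x y| ≤ l1 x * linf y :=
  calc |dot x y| ≤ ∑ i, |x i| * |y i| := by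
        simpa only [dot, abs_mul] using abs_sum_le_sum_abs (fun i => x i * y i) univ
    _ ≤ ∑ i, |x i| * linf y := by gcongr with i; exact abs_le_linf y i
    _ = l1 x * linf y := by rw [l1, sum_mul]

lemma l1_eq_l1on_add_l1on_compl (S : Finset (Fin n)) (x : Fin n → ℝ) :
    l1 x = l1on S x + l1on Sᶜ x :=
  (sum_add_sum_compl S _).symm

lemma sq_l1on_le_card_mul_sqnorm (S : Finset (Fin n)) (x : Fin n → ℝ) :
    l1on S x ^ 2 ≤ S.card * sqnorm x :=
  calc l1on S x ^ 2 ≤ S.card * ∑ i ∈ S, |x i| ^ 2 := sq_sum_le_card_mul_sum_sq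
    _ ≤ S.card * sqnorm x := by
      simp_rw [sq_abs]
      gcongr
      exact sum_le_sum_of_subset_of_nonneg (subset_univ S) fun _ _ _ => sq_nonneg _

lemma eq_zero_of_not_mem_supp {x : Fin n → ℝ} {i : Fin n} (hi : i ∉ supp x) : x i = 0 := by
  simpa [supp] using hi

lemma l1on_compl_supp_sub (x y : Fin n → ℝ) : l1on (supp y)ᶜ (x - y) = l1on (supp y)ᶜ x :=
  sum_congr rfl fun i hi => by
    rw [Pi.sub_apply, eq_zero_of_not_mem_supp (mem_compl.1 hi), sub_zero]

lemma l1_eq_l1on_supp (y : Fin n → ℝ) : l1 y = l1on (supp y) y := by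
  rw [l1_eq_l1on_add_l1on_compl (supp y), add_eq_left]
  exact sum_eq_zero fun i hi => by rw [eq_zero_of_not_mem_supp (mem_compl.1 hi), abs_zero]

lemma l1on_compl_sub_l1on_le_l1_sub (x y : Fin n → ℝ) :
    l1on (supp y)ᶜ (x - y) - l1on (supp y) (x - y) ≤ l1 x - l1 y := by
  have hS : l1on (supp y) y - l1on (supp y) x ≤ l1on (supp y) (x - y) := by
    rw [l1on, l1on, l1on, ← sum_sub_distrib]
    gcongr with i
    rw [Pi.sub_apply, abs_sub_comm]
    exact abs_sub_abs_le_abs_sub _ _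
  rw [l1_eq_l1on_add_l1on_compl (supp y) x, l1_eq_l1on_supp y, l1on_compl_supp_sub]
  linarith

lemma l0_sub_le (x y : Fin n → ℝ) : l0 (x - y) ≤ (supp y).card + l0on (supp y)ᶜ x := by
  refine (card_le_card fun i hi => ?_).trans (card_union_le _ _)
  by_cases hy : i ∈ supp y
  · exact mem_union_left _ hy
  · have hxy : x i - y i ≠ 0 := (mem_filter.1 hi).2
    rw [eq_zero_of_not_mem_supp hy, sub_zero] at hxy
    exact mem_union_right _ (mem_filter.2 ⟨mem_compl.2 hy, hxy⟩)

end Vectors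

section RestrictedEigenvalues

variable (A : Matrix (Fin m) (Fin n) ℝ)

def sparseRayleigh (s : ℕ) : Set ℝ :=
  {r | ∃ x : Fin n → ℝ, x ≠ 0 ∧ l0 x ≤ s ∧ r = sqnorm (A.mulVec x) / sqnorm x}

lemma sqnorm_mulVec_le (x : Fin n → ℝ) :
    sqnorm (A *ᵥ x) ≤ (∑ j, ∑ i, A j i ^ 2) * sqnorm x := by
  rw [sqnorm, sum_mul]
  exact sum_le_sum fun j _ => sum_mul_sq_le_sq_mul_sq univ (A j) x

lemma bddAbove_sparseRayleigh (s : ℕ) : BddAbove (sparseRayleigh A s) := by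
  refine ⟨∑ j, ∑ i, A j i ^ 2, ?_⟩
  rintro r ⟨x, hx, -, rfl⟩
  exact (div_le_iff₀ (sqnorm_pos hx)).2 (sqnorm_mulVec_le A x)

lemma bddBelow_sparseRayleigh (s : ℕ) : BddBelow (sparseRayleigh A s) := by
  refine ⟨0, ?_⟩
  rintro r ⟨x, -, -, rfl⟩
  exact div_nonneg (sqnorm_nonneg _) (sqnorm_nonneg _)

lemma rhoPlus_nonneg (s : ℕ) : 0 ≤ rhoPlus A s := by
  refine Real.sSup_nonneg fun r ⟨x, _, _, hr⟩ => ?_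
  exact hr ▸ div_nonneg (sqnorm_nonneg _) (sqnorm_nonneg _)

variable {A}

lemma sqnorm_mulVec_le_rhoPlus {s : ℕ} {x : Fin n → ℝ} (hx : l0 x ≤ s) :
    sqnorm (A *ᵥ x) ≤ rhoPlus A s * sqnorm x := by
  rcases eq_or_ne x 0 with rfl | hx0
  · simp
  · rw [← div_le_iff₀ (sqnorm_pos hx0)]
    exact le_csSup (bddAbove_sparseRayleigh A s) ⟨x, hx0, hx, rfl⟩

lemma rhoMinus_mul_sqnorm_le {s : ℕ} {x : Fin n → ℝ} (hx : l0 x ≤ s) :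
    rhoMinus A s * sqnorm x ≤ sqnorm (A *ᵥ x) := by
  rcases eq_or_ne x 0 with rfl | hx0
  · simp
  · rw [← le_div_iff₀ (sqnorm_pos hx0)]
    exact csInf_le (bddBelow_sparseRayleigh A s) ⟨x, hx0, hx, rfl⟩

lemma l0_single_le (i : Fin n) (c : ℝ) : l0 (Pi.single i c) ≤ 1 :=
  card_le_one.2 fun a ha b hb => by
    simp only [supp, mem_filter] at ha hb
    rw [Pi.single_apply] at ha hb
    grind

lemma rhoMinus_anti (i : Fin n) {s₁ s₂ : ℕ} (hs₁ : 1 ≤ s₁) (h : s₁ ≤ s₂) :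
    rhoMinus A s₂ ≤ rhoMinus A s₁ := by
  refine csInf_le_csInf (bddBelow_sparseRayleigh A s₂) ?_
    fun r ⟨x, hx, hl, hr⟩ => ⟨x, hx, hl.trans h, hr⟩
  exact ⟨_, Pi.single i 1, by simp, (l0_single_le i 1).trans hs₁, rfl⟩

end RestrictedEigenvalues

section ProximalStep

lemma hasDerivAt_prox_scalar {g y L lam t : ℝ} (ht : t ≠ 0) :
    HasDerivAt (fun s => g * (s - y) + L / 2 * (s - y) ^ 2 + lam * |s|)
      (g + L * (t - y) + lam * SignType.sign t) t := by
  have hsub : HasDerivAt (fun s => s - y) 1 t := (hasDerivAt_id' t).sub_const y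
  refine (((hsub.const_mul g).fun_add ((hsub.fun_pow 2).const_mul (L / 2))).fun_add
    ((hasDerivAt_abs ht).const_mul lam)).congr_deriv ?_
  norm_num
  ring

lemma stationary_of_isMinOn_prox_scalar {g y L lam t : ℝ} (ht : t ≠ 0)
    (hmin : IsMinOn (fun s => g * (s - y) + L / 2 * (s - y) ^ 2 + lam * |s|) Set.univ t) :
    g + L * (t - y) + lam * SignType.sign t = 0 :=
  (hmin.isLocalMin Filter.univ_mem).hasDerivAt_eq_zero (hasDerivAt_prox_scalar ht)

lemma sum_update_sub_sum (F : Fin n → ℝ → ℝ) (u : Fin n → ℝ) (i : Fin n) (s : ℝ) :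
    ∑ j, F j (Function.update u i s j) - ∑ j, F j (u j) = F i s - F i (u i) := by
  rw [← sum_sub_distrib, sum_eq_single i (fun j _ hj => by simp [hj]) (by simp)]
  simp

variable {A : Matrix (Fin m) (Fin n) ℝ} {b : Fin m → ℝ} {lam L : ℝ}

lemma psi_eq_fls_add_sum (y u : Fin n → ℝ) :
    psi A b lam L y u = fls A b y +
      ∑ j, (grad A b y j * (u j - y j) + L / 2 * (u j - y j) ^ 2 + lam * |u j|) := by
  simp only [psi, dot, sqnorm, l1, Pi.sub_apply, sum_add_distrib, mul_sum]
  ring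

lemma prox_stationary {x T : Fin n → ℝ} (hT : ∀ u, psi A b lam L x T ≤ psi A b lam L x u)
    {i : Fin n} (hi : T i ≠ 0) :
    grad A b x i + L * (T i - x i) + lam * SignType.sign (T i) = 0 := by
  refine stationary_of_isMinOn_prox_scalar hi fun s _ => ?_
  have h := hT (Function.update T i s)
  rw [psi_eq_fls_add_sum, psi_eq_fls_add_sum, ← sub_nonneg, add_sub_add_left_eq_sub,
    sum_update_sub_sum (fun j r => grad A b x j * (r - x j) + L / 2 * (r - x j) ^ 2 + lam * |r|)]
    at h
  exact sub_nonneg.1 h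

end ProximalStep

section NoisyModel

variable {A : Matrix (Fin m) (Fin n) ℝ} {b z : Fin m → ℝ} {xbar : Fin n → ℝ}

lemma grad_eq_of_eq_add (hb : b = A *ᵥ xbar + z) (x : Fin n → ℝ) :
    grad A b x = Aᵀ *ᵥ (A *ᵥ (x - xbar) - z) := by
  rw [grad]
  congr 1
  rw [hb, mulVec_sub]
  abel

lemma fls_eq_of_eq_add (hb : b = A *ᵥ xbar + z) (x : Fin n → ℝ) :
    fls A b x = fls A b xbar + sqnorm (A *ᵥ (x - xbar)) / 2 - dot (x - xbar) (Aᵀ *ᵥ z) := by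
  have hx : A *ᵥ x - b = A *ᵥ (x - xbar) - z := by rw [hb, mulVec_sub]; abel
  have hxbar : A *ᵥ xbar - b = -z := by rw [hb]; abel
  rw [fls, fls, hx, hxbar, dot_transpose_mulVec]
  simp only [sqnorm_eq_dotProduct, dot, dotProduct_sub, sub_dotProduct, neg_dotProduct,
    dotProduct_neg, neg_neg, dotProduct_comm z]
  change _ = _ - (A *ᵥ (x - xbar)) ⬝ᵥ z
  ring

lemma linf_le_of_noiseCond {dp gam lam : ℝ} (h : noiseCond A z dp gam lam) :
    linf (Aᵀ *ᵥ z) ≤ lam / 4 := by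
  have h4 := mul_le_mul_of_nonneg_right (le_max_left 4 ((gam + 1) / ((1 - dp) * gam - (1 + dp))))
    (linf_nonneg (Aᵀ *ᵥ z))
  rw [noiseCond] at h
  linarith

lemma cone_inequality {x : Fin n → ℝ} {lam c E : ℝ} (hb : b = A *ᵥ xbar + z) (hlam : 0 ≤ lam)
    (hc : linf (Aᵀ *ᵥ z) ≤ c) (hobj : phi A b lam x ≤ phi A b lam xbar + E) :
    sqnorm (A *ᵥ (x - xbar)) / 2 + (lam - c) * l1on (supp xbar)ᶜ (x - xbar)
      ≤ (lam + c) * l1on (supp xbar) (x - xbar) + E := by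
  have hnoise : dot (x - xbar) (Aᵀ *ᵥ z) ≤ l1 (x - xbar) * c :=
    (le_abs_self _).trans <| (abs_dot_le_l1_mul_linf _ _).trans <|
      mul_le_mul_of_nonneg_left hc (l1_nonneg _)
  have hl1 := mul_le_mul_of_nonneg_left (l1on_compl_sub_l1on_le_l1_sub x xbar) hlam
  rw [l1_eq_l1on_add_l1on_compl (supp xbar)] at hnoise
  rw [phi, phi, fls_eq_of_eq_add hb] at hobj
  linarith

end NoisyModel

section Estimates

lemma two_lt_one_sub_mul_one_add {δ γ : ℝ} (hδ1 : δ < 1) (hγ : γ > (1 + δ) / (1 - δ)) :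
    2 < (1 - δ) * (1 + γ) := by
  rw [gt_iff_lt, div_lt_iff₀ (sub_pos.2 hδ1)] at hγ
  linarith

lemma bounds_of_cone_inequality {ρ lam δ γ s N R u v : ℝ} (hρ : 0 < ρ) (hlam : 0 < lam)
    (hδ0 : 0 < δ) (hδ1 : δ < 1) (hγ : γ > (1 + δ) / (1 - δ)) (hs : 0 ≤ s) (hR0 : 0 ≤ R) (hv : 0 ≤ v)
    (hRE : ρ * N ≤ R) (hu : u ^ 2 ≤ s * N)
    (hcone : R / 2 + (lam - lam / 4) * v ≤
      (lam + lam / 4) * u + 2 * δ * (1 + γ) * lam ^ 2 * s / ρ) :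
    ρ * R ≤ 9 * (1 + γ) * lam ^ 2 * s ∧ ρ * v ≤ 23 / 3 * (1 + γ) * lam * s := by
  have hg := two_lt_one_sub_mul_one_add hδ1 hγ
  set g := 1 + γ
  have hg1 : 1 < g := by nlinarith
  have hcone' : ρ * R / 2 + 3 * lam / 4 * (ρ * v) ≤
      5 * lam / 4 * (ρ * u) + 2 * δ * g * lam ^ 2 * s := by
    have h := mul_le_mul_of_nonneg_left hcone hρ.le
    rw [mul_add ρ _ (_ / ρ), mul_div_cancel₀ _ hρ.ne'] at h
    linarith
  have hu' : (ρ * u) ^ 2 ≤ s * (ρ * R) := by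
    have := mul_le_mul_of_nonneg_left hu (sq_nonneg ρ)
    have := mul_le_mul_of_nonneg_left hRE (mul_nonneg hs hρ.le)
    nlinarith
  have hqv : 0 ≤ lam * (ρ * v) := by positivity
  have hR : ρ * R ≤ 9 * g * lam ^ 2 * s := by
    rcases hs.eq_or_lt with rfl | hs
    · have hu0 : ρ * u = 0 := by nlinarith
      nlinarith
    · have h1 := mul_le_mul_of_nonneg_left hcone' hs.le
      have hcoef : (25 / 4 + 8 * δ * g) * (lam ^ 2 * s ^ 2) ≤ 9 * g * (lam ^ 2 * s ^ 2) :=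
        mul_le_mul_of_nonneg_right (by nlinarith) (by positivity)
      -- `5 λ s ρu ≤ (ρu)² + (5 λ s / 2)² ≤ s ρR + (5 λ s / 2)²`
      have h2 : s * (ρ * R) ≤ s * (9 * g * lam ^ 2 * s) := by
        nlinarith [sq_nonneg (ρ * u - 5 / 2 * lam * s), mul_nonneg hs.le hqv]
      exact le_of_mul_le_mul_left h2 hs
  have hu'' : ρ * u ≤ 3 * g * lam * s := by
    have h1 := mul_le_mul_of_nonneg_left hR hs
    have h2 : 9 * g * lam ^ 2 * s ^ 2 ≤ 9 * g ^ 2 * lam ^ 2 * s ^ 2 := by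
      have : g ≤ g ^ 2 := by nlinarith
      gcongr
    exact le_of_sq_le_sq (by nlinarith) (by positivity)
  refine ⟨hR, le_of_mul_le_mul_left (a := 3 * lam / 4) ?_ (by positivity)⟩
  have h1 : δ * (g * lam ^ 2 * s) ≤ g * lam ^ 2 * s :=
    mul_le_of_le_one_left (by positivity) hδ1.le
  nlinarith [mul_le_mul_of_nonneg_left hu'' (by positivity : (0 : ℝ) ≤ 5 * lam / 4)]

end Estimates

section SupportGrowth

def signOn (S : Finset (Fin n)) (x : Fin n → ℝ) : Fin n → ℝ :=
  fun i => if i ∈ S then (SignType.sign (x i) : ℝ) else 0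

lemma abs_sign_le_one (t : ℝ) : |(SignType.sign t : ℝ)| ≤ 1 := by
  rcases lt_trichotomy t 0 with h | rfl | h <;> simp [*]

lemma sign_mul_sign_of_ne_zero {t : ℝ} (ht : t ≠ 0) :
    (SignType.sign t : ℝ) * SignType.sign t = 1 := by
  rcases ht.lt_or_gt with h | h <;> simp [*]

lemma dot_signOn (y : Fin n → ℝ) (S : Finset (Fin n)) (x : Fin n → ℝ) :
    dot y (signOn S x) = ∑ i ∈ S, y i * SignType.sign (x i) := by
  simp [dot, signOn, mul_ite]

lemma l1_signOn_le (S : Finset (Fin n)) (x : Fin n → ℝ) : l1 (signOn S x) ≤ S.card := by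
  simp only [l1, signOn, apply_ite, abs_zero, sum_ite_mem, univ_inter]
  exact (sum_le_sum fun i _ => abs_sign_le_one (x i)).trans_eq (by simp)

lemma sqnorm_signOn_le (S : Finset (Fin n)) (x : Fin n → ℝ) : sqnorm (signOn S x) ≤ S.card := by
  simp only [sqnorm, signOn, ite_pow, ne_eq, OfNat.ofNat_ne_zero, not_false_eq_true, zero_pow,
    sum_ite_mem, univ_inter]
  exact (sum_le_sum fun i _ => (sq_le_one_iff_abs_le_one _).2 (abs_sign_le_one (x i))).trans_eq
    (by simp)

lemma l0_signOn_le (S : Finset (Fin n)) (x : Fin n → ℝ) : l0 (signOn S x) ≤ S.card :=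
  card_le_card fun i hi => by
    by_contra h
    simp [supp, signOn, h] at hi

lemma sq_dot_mulVec_signOn_le (A : Matrix (Fin m) (Fin n) ℝ) (S : Finset (Fin n))
    (x : Fin n → ℝ) (p : Fin m → ℝ) :
    dot (A *ᵥ signOn S x) p ^ 2 ≤ rhoPlus A S.card * S.card * sqnorm p :=
  (sq_dot_le_sqnorm_mul_sqnorm _ _).trans <| mul_le_mul_of_nonneg_right
    ((sqnorm_mulVec_le_rhoPlus (l0_signOn_le S x)).trans
      (mul_le_mul_of_nonneg_left (sqnorm_signOn_le S x) (rhoPlus_nonneg A _)))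
    (sqnorm_nonneg _)

lemma lam_sub_mul_card_le {A : Matrix (Fin m) (Fin n) ℝ} {b z : Fin m → ℝ}
    {xbar x T : Fin n → ℝ} {lam L c : ℝ} (hb : b = A *ᵥ xbar + z)
    (hc : linf (Aᵀ *ᵥ z) ≤ c) (hL : 0 ≤ L) (hT : ∀ u, psi A b lam L x T ≤ psi A b lam L x u)
    {S : Finset (Fin n)} (hS : S ⊆ (supp xbar)ᶜ.filter (fun i => T i ≠ 0)) :
    (lam - c) * S.card ≤
      |dot (A *ᵥ signOn S T) (A *ᵥ (x - xbar))| + L * l1on (supp xbar)ᶜ (x - xbar) := by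
  have hTS : ∀ i ∈ S, T i ≠ 0 := fun i hi => (mem_filter.1 (hS hi)).2
  have hstat : ∑ i ∈ S, (grad A b x i + L * (T i - x i)) * SignType.sign (T i) =
      -(lam * S.card) := by
    calc _ = ∑ _i ∈ S, -lam := sum_congr rfl fun i hi => by
          linear_combination (SignType.sign (T i) : ℝ) * prox_stationary hT (hTS i hi) -
            lam * sign_mul_sign_of_ne_zero (hTS i hi)
      _ = _ := by simp [mul_comm]
  have hsplit : ∑ i ∈ S, (grad A b x i + L * (T i - x i)) * SignType.sign (T i) =
      dot (grad A b x) (signOn S T) + L * ∑ i ∈ S, |T i| -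
        L * ∑ i ∈ S, x i * SignType.sign (T i) := by
    rw [dot_signOn, mul_sum, mul_sum, ← sum_add_distrib, ← sum_sub_distrib]
    exact sum_congr rfl fun i _ => by rw [← self_mul_sign (T i)]; ring
  have hgrad : dot (grad A b x) (signOn S T) =
      dot (A *ᵥ signOn S T) (A *ᵥ (x - xbar)) - dot (signOn S T) (Aᵀ *ᵥ z) := by
    rw [grad_eq_of_eq_add hb, dot_comm, dot_transpose_mulVec, dot_transpose_mulVec]
    exact dotProduct_sub _ _ _
  have hx : ∑ i ∈ S, x i * SignType.sign (T i) ≤ l1on (supp xbar)ᶜ (x - xbar) :=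
    calc ∑ i ∈ S, x i * SignType.sign (T i) ≤ ∑ i ∈ S, |x i| := sum_le_sum fun i _ =>
          (le_abs_self _).trans <| (abs_mul _ _).trans_le <|
            mul_le_of_le_one_right (abs_nonneg _) (abs_sign_le_one _)
      _ ≤ l1on (supp xbar)ᶜ x := sum_le_sum_of_subset_of_nonneg (hS.trans (filter_subset _ _))
          fun _ _ _ => abs_nonneg _
      _ = l1on (supp xbar)ᶜ (x - xbar) := (l1on_compl_supp_sub x xbar).symm
  have hz : |dot (signOn S T) (Aᵀ *ᵥ z)| ≤ S.card * c :=
    (abs_dot_le_l1_mul_linf _ _).trans <|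
      mul_le_mul (l1_signOn_le S T) hc (linf_nonneg _) (Nat.cast_nonneg _)
  have hTabs : 0 ≤ L * ∑ i ∈ S, |T i| := mul_nonneg hL (sum_nonneg fun _ _ => abs_nonneg _)
  have := mul_le_mul_of_nonneg_left hx hL
  linarith [neg_abs_le (dot (A *ᵥ signOn S T) (A *ᵥ (x - xbar))),
    le_abs_self (dot (signOn S T) (Aᵀ *ᵥ z))]

lemma mul_card_le_of_estimates {ρ lam g s k L P Q R v t : ℝ} (hρ : 0 < ρ) (hlam : 0 < lam)
    (hg : 0 ≤ g) (hs : 0 ≤ s) (hk : 0 ≤ k) (hL : 0 ≤ L) (hLP : L ≤ P) (hQ : 0 ≤ Q)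
    (hR : ρ * R ≤ 9 * g * lam ^ 2 * s) (hv : ρ * v ≤ 23 / 3 * g * lam * s)
    (hcard : (lam - lam / 4) * k ≤ |t| + L * v) (ht : t ^ 2 ≤ Q * k * R) :
    ρ * k ≤ 16 * (P + 2 * Q) * g * s := by
  have hρt : ρ * |t| ≤ ρ * lam * k / 4 + 9 * Q * g * lam * s := by
    refine le_of_sq_le_sq ?_ (by positivity)
    calc (ρ * |t|) ^ 2 = ρ ^ 2 * t ^ 2 := by rw [mul_pow, sq_abs]
      _ ≤ ρ * Q * k * (ρ * R) := by nlinarith [mul_le_mul_of_nonneg_left ht (sq_nonneg ρ)]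
      _ ≤ ρ * Q * k * (9 * g * lam ^ 2 * s) := by gcongr
      _ ≤ (ρ * lam * k / 4 + 9 * Q * g * lam * s) ^ 2 := by
        nlinarith [sq_nonneg (ρ * lam * k / 4 - 9 * Q * g * lam * s)]
  have h1 := mul_le_mul_of_nonneg_left hcard hρ.le
  have h2 := mul_le_mul_of_nonneg_left hv hL
  have h3 : lam * (ρ * k) ≤ lam * (18 * Q * g * s + 46 / 3 * L * g * s) := by nlinarith
  have h4 := le_of_mul_le_mul_left h3 hlam
  nlinarith [mul_le_mul_of_nonneg_right hLP (mul_nonneg hg hs), mul_nonneg hQ (mul_nonneg hg hs)]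

end SupportGrowth

theorem stmt5_general {m n : ℕ} (A : Matrix (Fin m) (Fin n) ℝ) (b : Fin m → ℝ)
    (xbar : Fin n → ℝ) (z : Fin m → ℝ) (hb : b = A.mulVec xbar + z)
    (dp gam lam : ℝ) (hdp0 : 0 < dp) (hdp1 : dp < 1)
    (hgam : gam > (1 + dp) / (1 - dp))
    (hlam : 0 < lam) (hnoise : noiseCond A z dp gam lam)
    (Gu : ℝ) (st : ℕ) (hst : 1 ≤ st)
    (hrho : 0 < rhoMinus A ((supp xbar).card + 2 * st))
    (hstbig : (st : ℝ) > 16 * (Gu * rhoPlus A ((supp xbar).card + 2 * st)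
        + 2 * rhoPlus A st) * (1 + gam) * ((supp xbar).card : ℝ) /
        rhoMinus A ((supp xbar).card + st))
    (x : Fin n → ℝ) (hxsp : l0on (supp xbar)ᶜ x ≤ st)
    (hobj : phi A b lam x ≤ phi A b lam xbar +
      2 * dp * (1 + gam) * lam ^ 2 * ((supp xbar).card : ℝ) /
        rhoMinus A ((supp xbar).card + st))
    (L : ℝ) (hL0 : 0 < L) (hL1 : L < Gu * rhoPlus A ((supp xbar).card + 2 * st))
    (T : Fin n → ℝ) (hT : ∀ u, psi A b lam L x T ≤ psi A b lam L x u) :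
    l0on (supp xbar)ᶜ T < st := by
  by_contra! hK
  obtain ⟨S, hS, hScard⟩ := exists_subset_card_eq hK
  obtain ⟨i, -⟩ : S.Nonempty := card_pos.1 (by omega)
  have hρ : 0 < rhoMinus A ((supp xbar).card + st) :=
    hrho.trans_le (rhoMinus_anti i (by omega) (by omega))
  have hc := linf_le_of_noiseCond hnoise
  obtain ⟨hR, hv⟩ := bounds_of_cone_inequality hρ hlam hdp0 hdp1 hgam (Nat.cast_nonneg _)
    (sqnorm_nonneg _) (l1on_nonneg _ _)
    (rhoMinus_mul_sqnorm_le ((l0_sub_le x xbar).trans (by omega)))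
    (sq_l1on_le_card_mul_sqnorm _ _) (cone_inequality hb hlam.le hc hobj)
  have hcard := lam_sub_mul_card_le hb hc hL0.le hT hS
  have hCS := sq_dot_mulVec_signOn_le A S T (A *ᵥ (x - xbar))
  rw [hScard] at hcard hCS
  have := mul_card_le_of_estimates hρ hlam
    (by nlinarith [two_lt_one_sub_mul_one_add hdp1 hgam]) (Nat.cast_nonneg _) (Nat.cast_nonneg _)
    hL0.le hL1.le (rhoPlus_nonneg A st) hR hv hcard hCS
  rw [gt_iff_lt, div_lt_iff₀ hρ] at hstbig
  linarith

theorem stmt5 {m n : ℕ} (A : Matrix (Fin m) (Fin n) ℝ) (b : Fin m → ℝ)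
    (xbar : Fin n → ℝ) (z : Fin m → ℝ) (hb : b = A.mulVec xbar + z)
    (dp gam lam : ℝ) (hdp0 : 0 < dp) (hdp1 : dp < 1)
    (hgam : gam > (1 + dp) / (1 - dp))
    (hlam : 0 < lam) (hnoise : noiseCond A z dp gam lam)
    (Gu : ℝ) (hGu : 1 < Gu) (st : ℕ) (hst : 1 ≤ st)
    (hrho : 0 < rhoMinus A ((supp xbar).card + 2 * st))
    (hstbig : (st : ℝ) > 16 * (Gu * rhoPlus A ((supp xbar).card + 2 * st)
        + 2 * rhoPlus A st) * (1 + gam) * ((supp xbar).card : ℝ) /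
        rhoMinus A ((supp xbar).card + st))
    (x : Fin n → ℝ) (hxsp : l0on (supp xbar)ᶜ x ≤ st)
    (hobj : phi A b lam x ≤ phi A b lam xbar +
      2 * dp * (1 + gam) * lam ^ 2 * ((supp xbar).card : ℝ) /
        rhoMinus A ((supp xbar).card + st))
    (L : ℝ) (hL0 : 0 < L) (hL1 : L < Gu * rhoPlus A ((supp xbar).card + 2 * st))
    (T : Fin n → ℝ) (hT : ∀ u, psi A b lam L x T ≤ psi A b lam L x u) :
    l0on (supp xbar)ᶜ T < st :=
  stmt5_general A b xbar z hb dp gam lam hdp0 hdp1 hgam hlam hnoise Gu st hst hrho hstbig x hxsp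
    hobj L hL0 hL1 T hT

end PGH
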